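/- For every Δ > 1 and every finite discrete interval Λ ⊂ ℤ, one has (1 − 1/Δ) W^Λ ≤ H_0^Λ as self-adjoint operators on H_Λ. Consequently, if λ > 0 and ω_i ≥ 0 for all i ∈ Λ, then (1 − 1/Δ) W^Λ ≤ H^Λ. -/

import Mathlib

open scoped BigOperators ENNReal
open MeasureTheory

noncomputable section

namespace XXZ

/-- A (finite) discrete interval: a set of integers closed under betweenness. -/
def IsInterval (A : Finset ℤ) : Prop :=
  ∀ x ∈ A, ∀ y ∈ A, ∀ z : ℤ, x ≤ z → z ≤ y → z ∈ A

/-- distance between two finite subsets of ℤ (junk value 0 if one is empty). -/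
def fdist (A B : Finset ℤ) : ℝ :=
  sInf ((fun p : ℤ × ℤ => |(p.1 : ℝ) - (p.2 : ℝ)|) '' ↑(A ×ˢ B))

/-- `[M]_s^Λ`, the `s`-neighborhood of `M` inside `Λ`. -/
def thick (Λ M : Finset ℤ) (s : ℕ) : Finset ℤ :=
  Λ.filter fun x => ∃ y ∈ M, (x - y).natAbs ≤ s

/-- `[M]_{-s}^Λ = {x ∈ M : dist(x, Λ\M) > s}`. -/
def innerThick (Λ M : Finset ℤ) (s : ℕ) : Finset ℤ :=
  M.filter fun x => ∀ y ∈ Λ \ M, (s : ℤ) < |x - y|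

/-- `∂_s^Λ M = [M]_s^Λ \ [M]_{-s}^Λ`. -/
def bdry (Λ M : Finset ℤ) (s : ℕ) : Finset ℤ := thick Λ M s \ innerThick Λ M s

/-- number of connected components of `A` (as a subset of an interval `Λ ⊆ ℤ`). -/
def numComponents (A : Finset ℤ) : ℕ := (A.filter fun x => x - 1 ∉ A).card

/-- spin configurations over `Λ`; `true` at a site means a particle (spin down). -/
abbrev Cfg (Λ : Finset ℤ) := (↥Λ) → Bool

/-- the Hilbert space `⨂_{i∈Λ} ℂ²`, realized as `ℓ²` of configurations. -/
abbrev HS (Λ : Finset ℤ) := EuclideanSpace ℂ (Cfg Λ)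

abbrev Op (Λ : Finset ℤ) := HS Λ →L[ℂ] HS Λ

abbrev Mat (Λ : Finset ℤ) := Matrix (Cfg Λ) (Cfg Λ) ℂ

variable (Λ : Finset ℤ)

def toOp (M : Mat Λ) : Op Λ := Matrix.toEuclideanCLM (𝕜 := ℂ) M

def toMat (T : Op Λ) : Mat Λ := (Matrix.toEuclideanCLM (𝕜 := ℂ)).symm T

/-- the local number operator `𝒩_i` (the copy of `½(1−σ^z)` at site `i`). -/
def NMat (i : ℤ) : Mat Λ :=
  Matrix.diagonal fun σ => if h : i ∈ Λ then (if σ ⟨i, h⟩ then 1 else 0) else 0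

def NOp (i : ℤ) : Op Λ := toOp Λ (NMat Λ i)

/-- `P_+^S`: orthogonal projection onto states with no particles in `S`. -/
def PplusMat (S : Finset ℤ) : Mat Λ :=
  Matrix.diagonal fun σ => if ∀ i : ↥Λ, (i : ℤ) ∈ S → σ i = false then 1 else 0

def Pplus (S : Finset ℤ) : Op Λ := toOp Λ (PplusMat Λ S)

/-- `P_-^S = 1 - P_+^S`. -/
def Pminus (S : Finset ℤ) : Op Λ := 1 - Pplus Λ S

/-- the configuration with the values at `i` and `i+1` exchanged. -/
def swapCfg (i : ℤ) (σ : Cfg Λ) : Cfg Λ := fun j =>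
  if (j : ℤ) = i then (if h : i + 1 ∈ Λ then σ ⟨i + 1, h⟩ else σ j)
  else if (j : ℤ) = i + 1 then (if h : i ∈ Λ then σ ⟨i, h⟩ else σ j)
  else σ j

/-- the hopping term `σ_i^+σ_{i+1}^- + σ_i^-σ_{i+1}^+`. -/
def hopMat (i : ℤ) : Mat Λ := fun σ τ =>
  if hi : i ∈ Λ then
    if hi1 : i + 1 ∈ Λ then
      (if τ ⟨i, hi⟩ ≠ τ ⟨i + 1, hi1⟩ ∧ σ = swapCfg Λ i τ then 1 else 0)
    else 0
  else 0

/-- `h_{i,i+1} = -𝒩_i 𝒩_{i+1} - (2Δ)⁻¹ (σ_i^+σ_{i+1}^- + σ_i^-σ_{i+1}^+)`. -/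
def hMat (Δ : ℝ) (i : ℤ) : Mat Λ :=
  -(NMat Λ i * NMat Λ (i + 1)) - ((2 * Δ : ℂ))⁻¹ • hopMat Λ i

/-- the XXZ Hamiltonian on a subset `S ⊆ Λ`, acting on `H_Λ`:
`Σ_{{i,i+1}⊆S} h_{i,i+1} + Σ_{i∈S} 𝒩_i + λ Σ_{i∈S} ω_i 𝒩_i`. -/
def HonMat (Δ lam : ℝ) (ω : ℤ → ℝ) (S : Finset ℤ) : Mat Λ :=
  (∑ i ∈ S.filter (fun i => i + 1 ∈ S), hMat Λ Δ i)
    + (∑ i ∈ S, NMat Λ i)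
    + (lam : ℂ) • (∑ i ∈ S, (ω i : ℂ) • NMat Λ i)

/-- the random XXZ Hamiltonian `H^Λ = H_0^Λ + λ Σ_{i∈Λ} ω_i 𝒩_i`. -/
def HOp (Δ lam : ℝ) (ω : ℤ → ℝ) : Op Λ := toOp Λ (HonMat Λ Δ lam ω Λ)

/-- the free Hamiltonian `H_0^Λ`. -/
def H0Op (Δ : ℝ) : Op Λ :=
  toOp Λ ((∑ i ∈ Λ.filter (fun i => i + 1 ∈ Λ), hMat Λ Δ i) + ∑ i ∈ Λ, NMat Λ i)

/-- the decoupled Hamiltonian `H^{A,A^c} = H^A + H^{A^c}` on `H_Λ`. -/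
def HdecOp (Δ lam : ℝ) (ω : ℤ → ℝ) (A : Finset ℤ) : Op Λ :=
  toOp Λ (HonMat Λ Δ lam ω A + HonMat Λ Δ lam ω (Λ \ A))

/-- the number-of-clusters operator `W^Λ = 𝒩^Λ - Σ 𝒩_i 𝒩_{i+1}`. -/
def WOp : Op Λ :=
  toOp Λ ((∑ i ∈ Λ, NMat Λ i)
    - ∑ i ∈ Λ.filter (fun i => i + 1 ∈ Λ), NMat Λ i * NMat Λ (i + 1))

/-- total number operator `𝒩^Λ`. -/
def NtotOp : Op Λ := toOp Λ (∑ i ∈ Λ, NMat Λ i)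

/-- spectral projection `χ_I(T)` (via the continuous functional calculus;
for a self-adjoint `T` the spectrum is finite, so every function is continuous on it). -/
def specProj (T : Op Λ) (I : Set ℝ) : Op Λ :=
  cfc (fun x : ℝ => I.indicator (fun _ => (1 : ℝ)) x) T

/-- `f(T)` for a real-valued (Borel) function `f`. -/
def opFun (T : Op Λ) (f : ℝ → ℝ) : Op Λ := cfc f T

/-- resolvent `(T - z)⁻¹` (junk value `0` when not invertible). -/
def res (T : Op Λ) (z : ℂ) : Op Λ := Ring.inverse (T - z • 1)

/-- the unitary `e^{itT}`. -/
def uexp (T : Op Λ) (t : ℝ) : Op Λ := NormedSpace.exp ((Complex.I * (t : ℂ)) • T)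

/-- Heisenberg evolution `τ_t(T) = e^{itH} T e^{-itH}`. -/
def heis (H : Op Λ) (t : ℝ) (T : Op Λ) : Op Λ := uexp Λ H t * T * uexp Λ H (-t)

/-- the deformed Hamiltonian `Ĥ_k^Λ`. -/
def Hhat (Δ lam : ℝ) (ω : ℤ → ℝ) (k : ℕ) : Op Λ :=
  if k = 0 then HOp Λ Δ lam ω + ((1 - 1 / Δ : ℝ) : ℂ) • specProj Λ (WOp Λ) {0}
  else HOp Λ Δ lam ω + ((k * (1 - 1 / Δ) : ℝ) : ℂ) •
    (specProj Λ (WOp Λ) (Set.Icc 1 k)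
      + (((k + 1 : ℝ) / k : ℝ) : ℂ) • specProj Λ (WOp Λ) {0})

/-- support predicate, on matrices: `M` acts as `M_A ⊗ I_{A^c}`. -/
def MatSupportedOn (M : Mat Λ) (A : Finset ℤ) : Prop :=
  (∀ σ τ : Cfg Λ, M σ τ ≠ 0 → ∀ i : ↥Λ, (i : ℤ) ∉ A → σ i = τ i) ∧
  (∀ σ τ σ' τ' : Cfg Λ,
    (∀ i : ↥Λ, (i : ℤ) ∈ A → (σ i = σ' i ∧ τ i = τ' i)) →
    (∀ i : ↥Λ, (i : ℤ) ∉ A → (σ i = τ i ∧ σ' i = τ' i)) → M σ τ = M σ' τ')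

/-- an observable on `H_Λ` is supported on `A ⊆ Λ` if it has the form `T_A ⊗ I`. -/
def SupportedOn (T : Op Λ) (A : Finset ℤ) : Prop := MatSupportedOn Λ (toMat Λ T) A

/-- the rank-one projection `π_M` onto the canonical basis vector `φ_M`. -/
def piProj (M : Finset ℤ) : Op Λ :=
  toOp Λ (Matrix.diagonal fun σ => if σ = (fun i : ↥Λ => decide ((i : ℤ) ∈ M)) then 1 else 0)

/-- the all-spins-up vacuum vector `Ω_Λ`. -/
def vac : HS Λ := EuclideanSpace.single (fun _ => false) 1

/-- extension of a field on `Λ` to `ℤ` by zero. -/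
def extend (ω : ↥Λ → ℝ) : ℤ → ℝ := fun i => if h : i ∈ Λ then ω ⟨i, h⟩ else 0

/-- expectation with respect to the i.i.d. field `{ω_i}_{i∈Λ}` with single-site measure `μ`. -/
def expec (μ : Measure ℝ) (F : (ℤ → ℝ) → ℝ) : ℝ :=
  ∫ ω : ↥Λ → ℝ, F (extend Λ ω) ∂(Measure.pi fun _ => μ)

/-- Borel functions vanishing outside `J` and bounded by `1`. -/
def B1 (J : Set ℝ) : Set (ℝ → ℝ) :=
  {f | Measurable f ∧ (∀ x, x ∉ J → f x = 0) ∧ ∀ x, |f x| ≤ 1}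

/-- `⟨t⟩ = (1+t²)^{1/2}`. -/
def jap (t : ℝ) : ℝ := Real.sqrt (1 + t ^ 2)

/-- the assumptions on the single-site distribution `μ`: a probability measure,
absolutely continuous with bounded density, with `{0,1} ⊆ supp μ ⊆ [0,1]`. -/
structure SingleSite (μ : Measure ℝ) : Prop where
  prob : IsProbabilityMeasure μ
  ac : μ ≪ volume
  bounded : ∃ C : ℝ≥0∞, C ≠ ⊤ ∧ ∀ᵐ x ∂volume, μ.rnDeriv volume x ≤ C
  supp_sub : μ (Set.Icc 0 1) = 1
  zero_mem : ∀ ε > 0, 0 < μ (Set.Ioo (-ε) ε)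
  one_mem : ∀ ε > 0, 0 < μ (Set.Ioo (1 - ε) (1 + ε))

/-- Condition `L_r`: quasi-locality (localization) on the energy interval
`Ǐ_{≤r} = (-∞, (r+7/8)(1-1/Δ)]`, with constants `ξ_r, θ_r` (and some `F_r`). -/
def ConditionL (μ : Measure ℝ) (Δ₀ lam0 Δ lam r ξ θ : ℝ) : Prop :=
  Δ₀ ≤ Δ ∧ lam0 ≤ lam ∧ 0 < ξ ∧ 0 < θ ∧
  ∃ F : ℝ, 0 < F ∧
    ∀ Λ : Finset ℤ, Λ.Nonempty → IsInterval Λ →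
    ∀ A B : Finset ℤ, A ⊆ B → B ⊆ Λ → IsInterval A →
      (expec Λ μ (fun ω =>
          ⨆ f ∈ B1 (Set.Iic ((r + 7 / 8) * (1 - 1 / Δ))),
            ‖Pminus Λ A * opFun Λ (HOp Λ Δ lam ω) f * Pplus Λ B‖)
        ≤ F * (Λ.card : ℝ) ^ ξ * Real.exp (-θ * fdist A (Λ \ B))) ∧
      ∀ z : ℂ, z.re ≤ (r + 7 / 8) * (1 - 1 / Δ) →
        expec Λ μ (fun ω =>
            ‖Pminus Λ A * res Λ (HOp Λ Δ lam ω) z * Pplus Λ B‖ ^ ((1 : ℝ) / 4))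
          ≤ F * (Λ.card : ℝ) ^ ξ * Real.exp (-θ * fdist A (Λ \ B))

/-- `β_{n/2}`:  `β_0 = 0`,  `β_q = β_{q-1/2} + 9⌈q⌉ + 13`. -/
def betaN : ℕ → ℕ
  | 0 => 0
  | n + 1 => betaN n + 9 * ((n + 2) / 2) + 13

end XXZ

/-!
Let `P_i` be the permutation matrix of the involution exchanging the spins at `i` and `i + 1`.
Since configurations with equal spins at `i` and `i + 1` are fixed by it, the hopping term is
`P_i - 1 + N_i + N_{i+1} - 2 N_i N_{i+1}`, and substituting this gives
`2Δ (H_0 - (1 - 1/Δ) W) = Σ_{i+1 ∉ Λ} N_i + Σ_{i-1 ∉ Λ} N_i + Σ_{i, i+1 ∈ Λ} (1 - P_i)`.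
Every summand is positive semidefinite, `1 - P_i` because `(1 - P_i)ᴴ (1 - P_i) = 2 (1 - P_i)`,
and so is the disorder term `λ Σ ω_i N_i`.
-/

open scoped ComplexOrder

namespace Matrix

theorem posSemidef_one_sub_permMatrix {n 𝕜 : Type*} [Fintype n] [DecidableEq n] [RCLike 𝕜]
    {σ : Equiv.Perm n} (hσ : Function.Involutive σ) :
    (1 - σ.permMatrix 𝕜).PosSemidef := by
  set P := σ.permMatrix 𝕜
  have hσσ : σ * σ = 1 := Equiv.ext hσ
  have hP : Pᴴ = P := by rw [conjTranspose_permMatrix, inv_eq_of_mul_eq_one_right hσσ]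
  have hPP : P * P = 1 := by rw [← permMatrix_mul, hσσ, permMatrix_one]
  have hsq : (1 - P)ᴴ * (1 - P) = (2 : 𝕜) • (1 - P) := by
    rw [conjTranspose_sub, conjTranspose_one, hP, sub_mul, mul_sub, mul_sub, hPP]
    simp only [one_mul, mul_one]
    module
  have h := (posSemidef_conjTranspose_mul_self (1 - P)).smul
    (inv_nonneg.mpr (zero_le_two (α := 𝕜)))
  rwa [hsq, smul_smul, inv_mul_cancel₀ two_ne_zero, one_smul] at h

end Matrix

theorem Finset.sum_bonds_add_sum_endpoints {M : Type*} [AddCommMonoid M] (s : Finset ℤ)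
    (f : ℤ → M) :
    ∑ i ∈ s.filter (· + 1 ∈ s), (f i + f (i + 1))
      + (∑ i ∈ s.filter (· + 1 ∉ s), f i + ∑ i ∈ s.filter (· - 1 ∉ s), f i)
      = 2 • ∑ i ∈ s, f i := by
  have hshift : ∑ i ∈ s.filter (· + 1 ∈ s), f (i + 1) = ∑ i ∈ s.filter (· - 1 ∈ s), f i :=
    Finset.sum_nbij' (· + 1) (· - 1) (by simp +contextual) (by simp +contextual)
      (by simp) (by simp) (by simp)
  rw [Finset.sum_add_distrib, hshift, add_add_add_comm, Finset.sum_filter_add_sum_filter_not,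
    Finset.sum_filter_add_sum_filter_not, two_nsmul]

namespace XXZ

variable (Λ : Finset ℤ)

theorem swapCfg_involutive (i : ℤ) : Function.Involutive (swapCfg Λ i) := by
  intro σ
  funext ⟨j, hj⟩
  unfold swapCfg
  split_ifs <;> subst_vars <;> simp_all

theorem swapCfg_eq_self_iff {i : ℤ} (hi : i ∈ Λ) (hi1 : i + 1 ∈ Λ) (τ : Cfg Λ) :
    swapCfg Λ i τ = τ ↔ τ ⟨i, hi⟩ = τ ⟨i + 1, hi1⟩ := by
  constructor
  · intro h
    have := congrFun h ⟨i, hi⟩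
    simp only [swapCfg, hi1, if_true, dif_pos] at this
    exact this.symm
  · intro h
    funext ⟨j, hj⟩
    unfold swapCfg
    split_ifs <;> subst_vars <;> simp_all

def swapPerm (i : ℤ) : Equiv.Perm (Cfg Λ) := (swapCfg_involutive Λ i).toPerm

theorem posSemidef_NMat (i : ℤ) : (NMat Λ i).PosSemidef :=
  Matrix.PosSemidef.diagonal fun σ => by dsimp only; split_ifs <;> simp

theorem hopMat_eq {i : ℤ} (hi : i ∈ Λ) (hi1 : i + 1 ∈ Λ) :
    hopMat Λ i = NMat Λ i + NMat Λ (i + 1) - (2 : ℂ) • (NMat Λ i * NMat Λ (i + 1))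
      - (1 - (swapPerm Λ i).permMatrix ℂ) := by
  ext σ τ
  have hswap : swapCfg Λ i σ = τ ↔ σ = swapCfg Λ i τ := (swapCfg_involutive Λ i).eq_iff
  simp only [hopMat, hi, hi1, ↓reduceDIte, ne_eq, NMat, Matrix.diagonal_add,
    Matrix.diagonal_mul_diagonal, mul_ite, mul_one, mul_zero, swapPerm, Matrix.sub_apply,
    Matrix.diagonal_apply, Matrix.smul_apply, smul_eq_mul, Matrix.one_apply,
    PEquiv.toMatrix_apply, Equiv.toPEquiv_apply, Function.Involutive.coe_toPerm, Option.mem_def,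
    Option.some.injEq, hswap]
  by_cases hm : τ ⟨i, hi⟩ = τ ⟨i + 1, hi1⟩
  · rw [(swapCfg_eq_self_iff Λ hi hi1 τ).mpr hm]
    by_cases hστ : σ = τ
    · subst hστ
      cases h : σ ⟨i + 1, hi1⟩ <;> norm_num [hm, h]
    · simp [hστ]
  · have hne : swapCfg Λ i τ ≠ τ := fun h => hm ((swapCfg_eq_self_iff Λ hi hi1 τ).mp h)
    by_cases hστ : σ = τ
    · subst hστ
      cases h1 : σ ⟨i, hi⟩ <;> cases h2 : σ ⟨i + 1, hi1⟩ <;> simp_all [Ne.symm hne]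
    · by_cases hs : σ = swapCfg Λ i τ <;> simp [hm, hστ, hs, hne]

def H0Mat (Δ : ℝ) : Mat Λ :=
  (∑ i ∈ Λ.filter (· + 1 ∈ Λ), hMat Λ Δ i) + ∑ i ∈ Λ, NMat Λ i

def WMat : Mat Λ :=
  (∑ i ∈ Λ, NMat Λ i) - ∑ i ∈ Λ.filter (· + 1 ∈ Λ), NMat Λ i * NMat Λ (i + 1)

theorem H0Mat_sub_WMat_eq (Δ : ℝ) :
    H0Mat Λ Δ - ((1 - 1 / Δ : ℝ) : ℂ) • WMat Λ = ((2 * Δ : ℂ))⁻¹ •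
      (∑ i ∈ Λ.filter (· + 1 ∉ Λ), NMat Λ i + ∑ i ∈ Λ.filter (· - 1 ∉ Λ), NMat Λ i
        + ∑ i ∈ Λ.filter (· + 1 ∈ Λ), (1 - (swapPerm Λ i).permMatrix ℂ)) := by
  have hbond : ∀ i ∈ Λ.filter (· + 1 ∈ Λ), hMat Λ Δ i = -(NMat Λ i * NMat Λ (i + 1))
      - ((2 * Δ : ℂ))⁻¹ • (NMat Λ i + NMat Λ (i + 1) - (2 : ℂ) • (NMat Λ i * NMat Λ (i + 1))
        - (1 - (swapPerm Λ i).permMatrix ℂ)) := fun i hi => by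
    rw [Finset.mem_filter] at hi
    rw [hMat, hopMat_eq Λ hi.1 hi.2]
  have hends := eq_sub_of_add_eq' (Finset.sum_bonds_add_sum_endpoints Λ (NMat Λ))
  rw [H0Mat, WMat, Finset.sum_congr rfl hbond, hends]
  simp only [Finset.sum_sub_distrib, Finset.sum_add_distrib, Finset.sum_neg_distrib,
    ← Finset.smul_sum]
  push_cast
  module

theorem posSemidef_H0Mat_sub_WMat {Δ : ℝ} (hΔ : 0 < Δ) :
    (H0Mat Λ Δ - ((1 - 1 / Δ : ℝ) : ℂ) • WMat Λ).PosSemidef := by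
  have hκ : (0 : ℂ) ≤ ((2 * Δ : ℂ))⁻¹ := by
    rw [← Complex.ofReal_ofNat, ← Complex.ofReal_mul, ← Complex.ofReal_inv, Complex.zero_le_real]
    positivity
  rw [H0Mat_sub_WMat_eq]
  refine Matrix.PosSemidef.smul (.add (.add ?_ ?_) ?_) hκ <;>
    refine Matrix.posSemidef_sum _ fun i _ => ?_
  · exact posSemidef_NMat Λ i
  · exact posSemidef_NMat Λ i
  · exact Matrix.posSemidef_one_sub_permMatrix (swapCfg_involutive Λ i)

theorem posSemidef_smul_sum_smul_NMat {lam : ℝ} (hlam : 0 ≤ lam) {ω : ℤ → ℝ}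
    (hω : ∀ i ∈ Λ, 0 ≤ ω i) : ((lam : ℂ) • ∑ i ∈ Λ, (ω i : ℂ) • NMat Λ i).PosSemidef :=
  .smul (Matrix.posSemidef_sum _ fun i hi =>
    (posSemidef_NMat Λ i).smul (Complex.zero_le_real.mpr (hω i hi)))
    (Complex.zero_le_real.mpr hlam)

theorem HonMat_self_eq_H0Mat_add (Δ lam : ℝ) (ω : ℤ → ℝ) :
    HonMat Λ Δ lam ω Λ = H0Mat Λ Δ + (lam : ℂ) • ∑ i ∈ Λ, (ω i : ℂ) • NMat Λ i :=
  rfl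

theorem isPositive_toOp_iff (M : Mat Λ) : (toOp Λ M).IsPositive ↔ M.PosSemidef := by
  rw [← ContinuousLinearMap.isPositive_toLinearMap_iff, toOp,
    Matrix.coe_toEuclideanCLM_eq_toEuclideanLin, Matrix.isPositive_toEuclideanLin_iff]

theorem W_le_H0_general
    (Λ : Finset ℤ) (Δ : ℝ) (hΔ : 1 < Δ) :
    (H0Op Λ Δ - ((1 - 1 / Δ : ℝ) : ℂ) • WOp Λ).IsPositive ∧
    ∀ lam : ℝ, 0 < lam → ∀ ω : ℤ → ℝ, (∀ i ∈ Λ, 0 ≤ ω i) →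
      (HOp Λ Δ lam ω - ((1 - 1 / Δ : ℝ) : ℂ) • WOp Λ).IsPositive := by
  have hOp (M : Mat Λ) : (toOp Λ M - ((1 - 1 / Δ : ℝ) : ℂ) • WOp Λ).IsPositive ↔
      (M - ((1 - 1 / Δ : ℝ) : ℂ) • WMat Λ).PosSemidef := by
    simp only [← isPositive_toOp_iff, toOp, WOp, WMat, map_sub, map_smul]
  have hW := posSemidef_H0Mat_sub_WMat Λ (zero_lt_one.trans hΔ)
  refine ⟨(hOp (H0Mat Λ Δ)).mpr hW, fun lam hlam ω hω => (hOp _).mpr ?_⟩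
  rw [HonMat_self_eq_H0Mat_add, add_sub_right_comm]
  exact hW.add (posSemidef_smul_sum_smul_NMat Λ hlam.le hω)

/-- the operator bound \eqref{H0W}: `(1-1/Δ)W^Λ ≤ H_0^Λ ≤ H^Λ`. -/
theorem W_le_H0
    (Λ : Finset ℤ) (hΛ : Λ.Nonempty) (hΛi : IsInterval Λ) (Δ : ℝ) (hΔ : 1 < Δ) :
    (H0Op Λ Δ - ((1 - 1 / Δ : ℝ) : ℂ) • WOp Λ).IsPositive ∧
    ∀ lam : ℝ, 0 < lam → ∀ ω : ℤ → ℝ, (∀ i ∈ Λ, 0 ≤ ω i) →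
      (HOp Λ Δ lam ω - ((1 - 1 / Δ : ℝ) : ℂ) • WOp Λ).IsPositive :=
  W_le_H0_general Λ Δ hΔ

end XXZ
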